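/- arXiv:1912.02883 — 5 statements merged into one kernel-verified Lean document; each statement's English description precedes it below -/
import Mathlib

section
/- Let G be a group, A a nonempty subset of G, and define φ(a,b) to hold iff b·a ∈ A. If φ is 2-stable, then A is a coset of a subgroup of G, i.e., there exist g ∈ G and a subgroup H ≤ G with A = g·H. -/
open Pointwise

/-- If `A` is nonempty and the relation `φ(a,b) ⟺ b·a ∈ A` is 2-stable,
then `A` is a coset of a subgroup of `G`. -/
theorem two_stable_is_coset {G : Type*} [Group G] (A : Set G) (hA : A.Nonempty)
    (hstable : ¬ ∃ a₁ a₂ b₁ b₂ : G,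
      b₁ * a₁ ∈ A ∧ b₂ * a₁ ∈ A ∧ b₂ * a₂ ∈ A ∧ b₁ * a₂ ∉ A) :
    ∃ (g : G) (H : Subgroup G), A = g • (H : Set G) := by
  obtain ⟨g, hg⟩ := hA
  have key : ∀ a b c, a ∈ A → b ∈ A → c ∈ A → a * b⁻¹ * c ∈ A := by
    intro a b c ha hb hc
    by_contra h
    exact hstable ⟨b, c, a * b⁻¹, 1, by simpa [mul_assoc] using ha, by simpa using hb,
      by simpa using hc, h⟩
  refine ⟨g, {
    carrier := {x | g * x ∈ A}
    one_mem' := by simpa using hg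
    mul_mem' := by
      intro x y hx hy
      have := key (g * x) g (g * y) hx hg hy
      simpa [mul_assoc] using this
    inv_mem' := by
      intro x hx
      have := key g (g * x) g hg hx hg
      simpa [mul_assoc, mul_inv_rev] using this }, ?_⟩
  ext a
  simp [Set.mem_smul_set_iff_inv_smul_mem, Subgroup.mem_mk, smul_eq_mul, mul_assoc]
end

section
/- Let G be an abelian group and A ⊆ G a Sidon set with |A| ≥ k ≥ 2. Then the relation ψ(x,y) ⟺ x + y ∈ A is not k-weakly normal: there exist k pairwise distinct translates −a₁ + A, …, −a_k + A (with a₁,…,a_k ∈ A distinct) whose intersection is nonempty. -/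
/-- For a Sidon set `A` of size at least `k ≥ 2` in an abelian group, the relation
`ψ(x,y) ⟺ x + y ∈ A` is not `k`-weakly normal: there are `k` pairwise distinct
translates `-aᵢ + A` (with the `aᵢ` distinct elements of `A`) with nonempty
common intersection. -/
theorem sidon_not_weakly_normal {G : Type*} [AddCommGroup G] (A : Set G)
    (hSidon : ∀ a₁ ∈ A, ∀ a₂ ∈ A, ∀ a₃ ∈ A, ∀ a₄ ∈ A,
      a₁ - a₂ = a₃ - a₄ → a₁ = a₂ ∨ a₁ = a₃)
    (k : ℕ) (hk : 2 ≤ k)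
    (hcard : ∃ a : Fin k → G, Function.Injective a ∧ ∀ i, a i ∈ A) :
    ∃ a : Fin k → G, Function.Injective a ∧ (∀ i, a i ∈ A) ∧
      (∀ i j, i ≠ j → {x | x + a i ∈ A} ≠ {x | x + a j ∈ A}) ∧
      (⋂ i, {x | x + a i ∈ A}).Nonempty := by
  obtain ⟨a, hinj, hmem⟩ := hcard
  refine ⟨a, hinj, hmem, ?_, ⟨0, ?_⟩⟩
  · intro i j hij hEq
    have hne : a i ≠ a j := fun h => hij (hinj h)
    have hx : (a j - a i) ∈ {x | x + a i ∈ A} := by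
      simp [Set.mem_setOf_eq, sub_add_cancel, hmem j]
    rw [hEq] at hx
    have hb : a j - a i + a j ∈ A := hx
    have hrel : (a j - a i + a j) - a j = a j - a i := by abel
    have h : a j - a i + a j = a j := by
      rcases hSidon _ hb _ (hmem j) _ (hmem j) _ (hmem i) hrel with h | h <;> exact h
    have : a j = a i := by
      have := sub_eq_zero.mp (by simpa [add_sub_cancel_right] using sub_eq_zero.mpr h)
      simpa [sub_eq_zero] using this
    exact hne this.symm
  · simp only [Set.mem_iInter, Set.mem_setOf_eq, zero_add]
    exact hmem
end

section
/- Let G be a group and A ⊆ G a finite nonempty subset with |A·A·A| ≤ K·|A|. Let B = A ∪ A⁻¹ ∪ {1}. Then |B·B·B| ≤ 14·K³·|A|. -/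
/-!
Put `C = A ∪ A⁻¹`, so `B = C ∪ {1}`. As `1 = a a⁻¹ ∈ C C`, the product `B B B = C C C ∪ C C ∪ C ∪ {1}`
is covered by the `2³ + 2² + 2 = 14` products `X Y Z`, `X Y`, `X` with `X, Y, Z ∈ {A, A⁻¹}`.
By the Ruzsa triangle inequality every triple product `A^{±1} A^{±1} A^{±1}` has at most `K³|A|`
elements (`Finset.small_alternating_pow_of_small_tripling`), and the shorter products are no
larger, since right multiplication by the nonempty set `A` does not shrink a set.
-/

open Finset
open scoped Pointwise

namespace Finset

section
variable {M : Type*} [DecidableEq M]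

lemma union_one_mul_union_one_mul_union_one [Monoid M] (s : Finset M) :
    (s ∪ 1) * (s ∪ 1) * (s ∪ 1) = s * s * s ∪ s * s ∪ s ∪ 1 := by
  simp only [mul_union, union_mul, mul_one, one_mul]
  ext
  simp only [mem_union]
  tauto

lemma biUnion_id_mul [Mul M] (S T : Finset (Finset M)) :
    (S * T).biUnion id = S.biUnion id * T.biUnion id := by
  refine Subset.antisymm (biUnion_subset.2 fun XY hXY ↦ ?_) fun _ h ↦ ?_
  · obtain ⟨X, hX, Y, hY, rfl⟩ := mem_mul.1 hXY
    exact mul_subset_mul (subset_biUnion_of_mem id hX) (subset_biUnion_of_mem id hY)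
  · obtain ⟨x, hx, y, hy, rfl⟩ := mem_mul.1 h
    obtain ⟨X, hX, hx⟩ := mem_biUnion.1 hx
    obtain ⟨Y, hY, hy⟩ := mem_biUnion.1 hy
    exact mem_biUnion.2 ⟨X * Y, mul_mem_mul hX hY, mul_mem_mul hx hy⟩

lemma card_biUnion_id_le (U : Finset (Finset M)) {m : ℝ} (h : ∀ X ∈ U, (#X : ℝ) ≤ m) :
    (#(U.biUnion id) : ℝ) ≤ #U * m :=
  (Nat.cast_le.2 card_biUnion_le).trans <| by simpa using sum_le_card_nsmul U _ _ h

end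

section Group
variable {G : Type*} [Group G] [DecidableEq G] {A X Y Z : Finset G} {K : ℝ}

lemma exists_zpow_eq_of_mem_pair_inv (hX : X ∈ ({A, A⁻¹} : Finset (Finset G))) :
    ∃ i : ℤ, |i| = 1 ∧ A ^ i = X := by
  simp only [mem_insert, mem_singleton] at hX
  obtain rfl | rfl := hX
  · exact ⟨1, by simp, by simp⟩
  · exact ⟨-1, by simp, by simp⟩

lemma card_mul_mul_le_of_small_tripling (hA : #(A ^ 3) ≤ K * #A)
    (hX : X ∈ ({A, A⁻¹} : Finset (Finset G))) (hY : Y ∈ ({A, A⁻¹} : Finset (Finset G)))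
    (hZ : Z ∈ ({A, A⁻¹} : Finset (Finset G))) : #(X * Y * Z) ≤ K ^ 3 * #A := by
  obtain ⟨i, hi, rfl⟩ := exists_zpow_eq_of_mem_pair_inv hX
  obtain ⟨j, hj, rfl⟩ := exists_zpow_eq_of_mem_pair_inv hY
  obtain ⟨k, hk, rfl⟩ := exists_zpow_eq_of_mem_pair_inv hZ
  have := small_alternating_pow_of_small_tripling le_rfl hA ![i, j, k] (by
    intro l; fin_cases l <;> assumption)
  simpa [List.finRange_succ, mul_assoc] using this

lemma card_mul_le_of_small_tripling (hA₀ : A.Nonempty) (hA : #(A ^ 3) ≤ K * #A)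
    (hX : X ∈ ({A, A⁻¹} : Finset (Finset G))) (hY : Y ∈ ({A, A⁻¹} : Finset (Finset G))) :
    #(X * Y) ≤ K ^ 3 * #A :=
  (Nat.cast_le.2 (card_le_card_mul_right hA₀)).trans <|
    card_mul_mul_le_of_small_tripling hA hX hY (mem_insert_self A _)

lemma card_le_of_small_tripling (hA₀ : A.Nonempty) (hA : #(A ^ 3) ≤ K * #A)
    (hX : X ∈ ({A, A⁻¹} : Finset (Finset G))) : #X ≤ K ^ 3 * #A :=
  (Nat.cast_le.2 (card_le_card_mul_right hA₀)).trans <|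
    card_mul_le_of_small_tripling hA₀ hA hX (mem_insert_self A _)

end Group
end Finset

/-- If `A` is a finite nonempty subset of a group with `|A·A·A| ≤ K|A|`, and
`B = A ∪ A⁻¹ ∪ {1}`, then `|B·B·B| ≤ 14·K³·|A|`. -/
theorem tripling_symmetrization {G : Type*} [Group G] [DecidableEq G]
    (A : Finset G) (hA : A.Nonempty) (K : ℝ)
    (htriple : ((A * A * A).card : ℝ) ≤ K * A.card)
    (B : Finset G) (hB : B = A ∪ A⁻¹ ∪ {1}) :
    ((B * B * B).card : ℝ) ≤ 14 * K ^ 3 * A.card := by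
  rw [← pow_three'] at htriple
  set S : Finset (Finset G) := {A, A⁻¹}
  -- pointwise products in `Finset (Finset G)`: `S * S` consists of the sets `X * Y` with `X, Y ∈ S`
  set U := S * S * S ∪ S * S ∪ S
  have hcover : B * B * B ⊆ U.biUnion id := by
    obtain ⟨a, ha⟩ := hA
    have hone : (1 : G) ∈ (A ∪ A⁻¹) * (A ∪ A⁻¹) := by
      simpa using mul_mem_mul (mem_union_left A⁻¹ ha) (mem_union_right A (inv_mem_inv ha))
    have hC : S.biUnion id = A ∪ A⁻¹ := by simp [S]
    rw [hB, union_biUnion, union_biUnion, biUnion_id_mul, biUnion_id_mul, hC, singleton_one,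
      union_one_mul_union_one_mul_union_one]
    exact union_subset subset_rfl <| one_subset.2 <| mem_union_left _ <| mem_union_right _ hone
  have hpieces : ∀ X ∈ U, (#X : ℝ) ≤ K ^ 3 * #A := by
    simp only [U, mem_union, mem_mul]
    rintro _ ((⟨_, ⟨X, hX, Y, hY, rfl⟩, Z, hZ, rfl⟩ | ⟨X, hX, Y, hY, rfl⟩) | hX)
    · exact card_mul_mul_le_of_small_tripling htriple hX hY hZ
    · exact card_mul_le_of_small_tripling hA htriple hX hY
    · exact card_le_of_small_tripling hA htriple hX
  have hU : #U ≤ 14 :=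
    calc #U ≤ #S * #S * #S + #S * #S + #S := by
          grw [card_union_le, card_union_le, card_mul_le, card_mul_le]
      _ ≤ 2 * 2 * 2 + 2 * 2 + 2 := by gcongr <;> exact card_le_two
  have hM : 0 ≤ K ^ 3 * #A := (Nat.cast_nonneg _).trans (hpieces A (by simp [U, S]))
  calc (#(B * B * B) : ℝ) ≤ #(U.biUnion id) := mod_cast card_le_card hcover
    _ ≤ #U * (K ^ 3 * #A) := card_biUnion_id_le U hpieces
    _ ≤ 14 * K ^ 3 * #A := by rw [mul_assoc]; gcongr; exact_mod_cast hU
end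

section
/- Let G be a group and A ⊆ G a finite nonempty set. Suppose H ≤ G is a subgroup with H ⊆ A·A⁻¹, and suppose C ⊆ A is a maximal subset such that the cosets {c·H : c ∈ C} are pairwise disjoint. Then A ⊆ C·H. -/
open Pointwise

/-- Ruzsa's covering argument: if `H ≤ G` is a subgroup contained in `A·A⁻¹`
and `C ⊆ A` is maximal such that the cosets `c·H`, `c ∈ C`, are pairwise
disjoint, then `A ⊆ C·H`. -/
theorem ruzsa_covering {G : Type*} [Group G] [DecidableEq G]
    (A : Finset G) (hA : A.Nonempty) (H : Subgroup G)
    (hH : (H : Set G) ⊆ (A : Set G) * (A : Set G)⁻¹)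
    (C : Finset G) (hCA : C ⊆ A)
    (hdisj : (C : Set G).Pairwise fun c c' =>
      Disjoint (c • (H : Set G)) (c' • (H : Set G)))
    (hmax : ∀ a ∈ A,
      (insert a (C : Set G)).Pairwise (fun c c' =>
        Disjoint (c • (H : Set G)) (c' • (H : Set G))) → a ∈ C) :
    (A : Set G) ⊆ (C : Set G) * (H : Set G) := by
  intro a ha
  simp only [Finset.mem_coe] at ha
  by_cases hc : a ∈ C
  · exact ⟨a, hc, 1, H.one_mem, mul_one a⟩
  · have hex : ∃ c ∈ C, ¬ Disjoint (a • (H : Set G)) (c • (H : Set G)) := by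
      by_contra h
      push_neg at h
      apply hc
      apply hmax a ha
      rw [Set.pairwise_insert]
      exact ⟨hdisj, fun b hb _ => ⟨h b hb, (h b hb).symm⟩⟩
    obtain ⟨c, hcC, hnd⟩ := hex
    obtain ⟨x, hx1, hx2⟩ := Set.not_disjoint_iff.mp hnd
    rw [Set.mem_smul_set_iff_inv_smul_mem] at hx1 hx2
    refine ⟨c, hcC, c⁻¹ * x * (a⁻¹ * x)⁻¹, H.mul_mem hx2 (H.inv_mem hx1), ?_⟩
    group
end

section
/- Let ψ₁, ψ₂ : X → Y → Prop be k₁- and k₂-weakly normal relations respectively. Then the conjunction ψ(x,y) := ψ₁(x,y) ∧ ψ₂(x,y) is m-weakly normal for m = (k₁−1)(k₂−1)+1. -/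
/-- A relation `ψ` is `k`-weakly normal if any `k` pairwise distinct instances
`ψ(·,b)` have empty intersection. -/
def WeaklyNormal {X Y : Type*} (k : ℕ) (ψ : X → Y → Prop) : Prop :=
  ∀ b : Fin k → Y,
    (∀ i j, i ≠ j → {x | ψ x (b i)} ≠ {x | ψ x (b j)}) →
    ⋂ i, {x | ψ x (b i)} = ∅

open scoped Classical

/-- If among the instances `ψ(·, b i)` there are at least `k` distinct sets,
then a `k`-weakly normal relation forces the whole intersection empty. -/
lemma weaklyNormal_aux {X Y : Type*} {k M : ℕ} (ψ : X → Y → Prop)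
    (h : WeaklyNormal k ψ) (b : Fin M → Y)
    (hcard : k ≤ ((Finset.univ : Finset (Fin M)).image
      (fun i => {x | ψ x (b i)})).card) :
    ⋂ i, {x | ψ x (b i)} = ∅ := by
  obtain ⟨t, hts, htc⟩ := Finset.exists_subset_card_eq hcard
  have e : Fin k ≃ {a // a ∈ t} :=
    (finCongr htc.symm).trans t.equivFin.symm
  have hc : ∀ i : Fin k, ∃ j : Fin M, {x | ψ x (b j)} = (e i : Set X) := by
    intro i
    have hmem := hts (e i).2
    rw [Finset.mem_image] at hmem
    obtain ⟨j, _, hj⟩ := hmem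
    exact ⟨j, hj⟩
  choose c hcspec using hc
  have hdist : ∀ i j : Fin k, i ≠ j →
      {x | ψ x ((b ∘ c) i)} ≠ {x | ψ x ((b ∘ c) j)} := by
    intro i j hij hEq
    apply hij
    apply e.injective
    exact Subtype.ext (by
      rw [← hcspec i, ← hcspec j]
      exact hEq)
  have hempty := h (b ∘ c) hdist
  ext x
  simp only [Set.mem_iInter, Set.mem_empty_iff_false, iff_false]
  intro hx
  have hx' : x ∈ ⋂ i : Fin k, {y | ψ y ((b ∘ c) i)} :=
    Set.mem_iInter.2 fun i => hx (c i)
  rw [hempty] at hx'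
  exact hx'

/-- The conjunction of a `k₁`-weakly normal relation and a `k₂`-weakly normal
relation is `((k₁-1)(k₂-1)+1)`-weakly normal. -/
theorem weakly_normal_conj {X Y : Type*} (k₁ k₂ : ℕ)
    (ψ₁ ψ₂ : X → Y → Prop)
    (h₁ : WeaklyNormal k₁ ψ₁) (h₂ : WeaklyNormal k₂ ψ₂) :
    WeaklyNormal ((k₁ - 1) * (k₂ - 1) + 1) (fun x y => ψ₁ x y ∧ ψ₂ x y) := by
  rcases Nat.eq_zero_or_pos k₁ with hk₁ | hk₁
  · subst hk₁
    intro b _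
    have h0 := h₁ Fin.elim0 (fun i => i.elim0)
    simp only [Set.iInter_of_empty] at h0
    ext x
    simp only [Set.mem_iInter, Set.mem_empty_iff_false, iff_false]
    intro _
    exact (h0 ▸ Set.mem_univ x : x ∈ (∅ : Set X))
  rcases Nat.eq_zero_or_pos k₂ with hk₂ | hk₂
  · subst hk₂
    intro b _
    have h0 := h₂ Fin.elim0 (fun i => i.elim0)
    simp only [Set.iInter_of_empty] at h0
    ext x
    simp only [Set.mem_iInter, Set.mem_empty_iff_false, iff_false]
    intro _
    exact (h0 ▸ Set.mem_univ x : x ∈ (∅ : Set X))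
  intro b hb
  -- the pair map is injective
  have hpair : Function.Injective
      (fun i : Fin ((k₁ - 1) * (k₂ - 1) + 1) =>
        ({x | ψ₁ x (b i)}, ({x | ψ₂ x (b i)} : Set X))) := by
    intro i j hij
    by_contra hne
    apply hb i j hne
    have hAij : {x | ψ₁ x (b i)} = {x | ψ₁ x (b j)} := congrArg Prod.fst hij
    have hBij : {x | ψ₂ x (b i)} = {x | ψ₂ x (b j)} := congrArg Prod.snd hij
    show {x | ψ₁ x (b i)} ∩ {x | ψ₂ x (b i)} = {x | ψ₁ x (b j)} ∩ {x | ψ₂ x (b j)}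
    rw [hAij, hBij]
  have hcardpair : ((Finset.univ : Finset (Fin ((k₁ - 1) * (k₂ - 1) + 1))).image
      (fun i => ({x | ψ₁ x (b i)}, ({x | ψ₂ x (b i)} : Set X)))).card
      = (k₁ - 1) * (k₂ - 1) + 1 := by
    rw [Finset.card_image_of_injective _ hpair, Finset.card_univ, Fintype.card_fin]
  have hsub : (Finset.univ.image
      (fun i => ({x | ψ₁ x (b i)}, ({x | ψ₂ x (b i)} : Set X))))
      ⊆ (Finset.univ.image (fun i => {x | ψ₁ x (b i)})) ×ˢ
        (Finset.univ.image (fun i => {x | ψ₂ x (b i)})) := by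
    intro p hp
    rw [Finset.mem_image] at hp
    obtain ⟨i, _, hi⟩ := hp
    rw [Finset.mem_product]
    refine ⟨Finset.mem_image.2 ⟨i, Finset.mem_univ i, by rw [← hi]⟩,
           Finset.mem_image.2 ⟨i, Finset.mem_univ i, by rw [← hi]⟩⟩
  have hle : (k₁ - 1) * (k₂ - 1) + 1 ≤
      (Finset.univ.image (fun i => {x | ψ₁ x (b i)})).card *
      (Finset.univ.image (fun i => {x | ψ₂ x (b i)})).card := by
    calc (k₁ - 1) * (k₂ - 1) + 1
        = _ := hcardpair.symm
      _ ≤ ((Finset.univ.image (fun i => {x | ψ₁ x (b i)})) ×ˢ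
          (Finset.univ.image (fun i => {x | ψ₂ x (b i)}))).card :=
        Finset.card_le_card hsub
      _ = _ := Finset.card_product _ _
  have hbig : k₁ ≤ (Finset.univ.image (fun i => {x | ψ₁ x (b i)})).card ∨
      k₂ ≤ (Finset.univ.image (fun i => {x | ψ₂ x (b i)})).card := by
    by_contra hcon
    push_neg at hcon
    obtain ⟨hA', hB'⟩ := hcon
    have hA'' := Nat.le_sub_one_of_lt hA'
    have hB'' := Nat.le_sub_one_of_lt hB'
    have := hle.trans (Nat.mul_le_mul hA'' hB'')
    omega
  rcases hbig with hbig | hbig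
  · have h0 : ⋂ i, {x | ψ₁ x (b i)} = ∅ := weaklyNormal_aux ψ₁ h₁ b hbig
    ext x
    simp only [Set.mem_iInter, Set.mem_empty_iff_false, iff_false, Set.mem_setOf_eq]
    intro hx
    have hx' : x ∈ ⋂ i, {x | ψ₁ x (b i)} := Set.mem_iInter.2 fun i => (hx i).1
    rw [h0] at hx'
    exact hx'
  · have h0 : ⋂ i, {x | ψ₂ x (b i)} = ∅ := weaklyNormal_aux ψ₂ h₂ b hbig
    ext x
    simp only [Set.mem_iInter, Set.mem_empty_iff_false, iff_false, Set.mem_setOf_eq]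
    intro hx
    have hx' : x ∈ ⋂ i, {x | ψ₂ x (b i)} := Set.mem_iInter.2 fun i => (hx i).2
    rw [h0] at hx'
    exact hx'
end
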